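/- For any word (s_{i_1}, …, s_{i_k}) in the simple reflections of W, the set of all products over subwords, {s_{i_{j_1}} s_{i_{j_2}} ⋯ s_{i_{j_ℓ}} : 0 ≤ ℓ ≤ k, 1 ≤ j_1 < j_2 < ⋯ < j_ℓ ≤ k}, has a maximum element in the Bruhat order, and this maximum equals the Demazure product s_{i_1} * s_{i_2} * ⋯ * s_{i_k}. -/
import Mathlib


open scoped Classical

/-- Data of a root system with a fixed choice of simple roots: an ambient
`ℚ`-vector space `V`, a set of roots `Φ` with a distinguished subset `pos` of
positive roots, a coroot functional `coroot β = ⟨·, β^∨⟩` for each root, and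
simple roots `α 1, …, α r`. -/
structure RootData where
  r : ℕ
  V : Type
  [grp : AddCommGroup V]
  [mod : Module ℚ V]
  Φ : Set V
  pos : Set V
  coroot : V → Module.Dual ℚ V
  α : Fin r → V

attribute [instance] RootData.grp RootData.mod

namespace RootData

variable (R : RootData)

/-- The group of linear automorphisms of `V`, in which the Weyl group lives. -/
abbrev Aut : Type := R.V ≃ₗ[ℚ] R.V

/-- The linear map `v ↦ v - ⟨v, β^∨⟩ β`. -/
noncomputable def reflMap (β : R.V) : R.V →ₗ[ℚ] R.V :=
  LinearMap.id - (R.coroot β).smulRight β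

/-- The reflection `s_β` associated to a root `β`, as a linear automorphism. -/
noncomputable def s (β : R.V) : R.Aut :=
  if h : (R.reflMap β).comp (R.reflMap β) = LinearMap.id then
    LinearEquiv.ofLinear (R.reflMap β) (R.reflMap β) h h
  else LinearEquiv.refl ℚ R.V

/-- The simple reflections `s_i := s_{α_i}`. -/
noncomputable def S (i : Fin R.r) : R.Aut := R.s (R.α i)

/-- The Weyl group `W`, generated by the simple reflections. -/
noncomputable def weylGroup : Subgroup R.Aut := Subgroup.closure (Set.range R.S)

/-- The product `s_{i_1} ⋯ s_{i_k}` of a word in the simple reflections. -/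
noncomputable def wordProd (l : List (Fin R.r)) : R.Aut := (l.map R.S).prod

/-- The length function on `W`: least length of a word in the simple
reflections expressing the given element. -/
noncomputable def len (w : R.Aut) : ℕ :=
  sInf {n | ∃ l : List (Fin R.r), l.length = n ∧ R.wordProd l = w}

/-- A word is reduced if its length equals the length of its product. -/
def Reduced (l : List (Fin R.r)) : Prop := R.len (R.wordProd l) = l.length

/-- The Bruhat order on `W`: `u ≤ w` iff some reduced word for `w` has a
subword whose product is `u`. -/
def BruhatLE (u w : R.Aut) : Prop :=
  ∃ l : List (Fin R.r), R.Reduced l ∧ R.wordProd l = w ∧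
    ∃ l' : List (Fin R.r), l'.Sublist l ∧ R.wordProd l' = u

/-- Strict Bruhat order. -/
def BruhatLT (u w : R.Aut) : Prop := R.BruhatLE u w ∧ u ≠ w

/-- One step of the Demazure product: `s_i * w := max {w, s_i w}`. -/
noncomputable def dmulStep (i : Fin R.r) (x : R.Aut) : R.Aut :=
  if R.len x < R.len (R.S i * x) then R.S i * x else x

/-- Demazure product of a word in the simple reflections against `w`:
`s_{i_1} * (s_{i_2} * (⋯ * (s_{i_k} * w)))`. -/
noncomputable def dmulList (l : List (Fin R.r)) (w : R.Aut) : R.Aut :=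
  l.foldr R.dmulStep w

/-- The Demazure product `v * w` on the Weyl group, computed by choosing a
reduced word for `v` (it is independent of this choice). -/
noncomputable def dmul (v w : R.Aut) : R.Aut :=
  if h : ∃ l : List (Fin R.r), R.Reduced l ∧ R.wordProd l = v then
    R.dmulList h.choose w
  else v * w

/-- The parabolic subgroup `W_{P_i}` generated by the simple reflections
`s_j`, `j ≠ i`. -/
noncomputable def WPar (i : Fin R.r) : Subgroup R.Aut :=
  Subgroup.closure (R.S '' {j | j ≠ i})

/-- `W^{P_i}`: the set of minimal-length representatives of cosets of
`W/W_{P_i}`. -/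
def minReps (i : Fin R.r) : Set R.Aut :=
  {v | v ∈ R.weylGroup ∧ ∀ p ∈ R.WPar i, R.len v ≤ R.len (v * p)}

/-- `u` is the minimal-length representative of the coset `w W_{P_i}`. -/
def IsMinRep (i : Fin R.r) (u w : R.Aut) : Prop :=
  u ∈ R.minReps i ∧ u⁻¹ * w ∈ R.WPar i

/-- A weight is dominant if it pairs nonnegatively with every simple coroot. -/
def Dominant (lam : R.V) : Prop := ∀ i : Fin R.r, 0 ≤ R.coroot (R.α i) lam

/-- The dual action of the Weyl group on `V* `: `(u f)(v) = f(u⁻¹ v)`. -/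
noncomputable def dualAct (u : R.Aut) (f : Module.Dual ℚ R.V) : Module.Dual ℚ R.V :=
  f.comp (u.symm : R.V →ₗ[ℚ] R.V)

/-- The Demazure polytope `P_λ^w := conv {uλ : u ∈ W, u ≤ w}`. -/
noncomputable def demPolytope (lam : R.V) (w : R.Aut) : Set R.V :=
  convexHull ℚ {m | ∃ u : R.Aut, u ∈ R.weylGroup ∧ R.BruhatLE u w ∧ m = u lam}

/-- Membership in the weight lattice `X`. -/
def IsWeight (lam : R.V) : Prop := ∀ β ∈ R.Φ, ∃ m : ℤ, R.coroot β lam = (m : ℚ)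

/-- The root lattice `Q = ℤΦ`. -/
noncomputable def rootLattice : AddSubgroup R.V := AddSubgroup.closure R.Φ

/-- `w₀` is the longest element of the Weyl group. -/
def IsLongest (w₀ : R.Aut) : Prop :=
  w₀ ∈ R.weylGroup ∧ ∀ g ∈ R.weylGroup, R.len g ≤ R.len w₀

/-- The positive roots `Φ_{P_i}⁺ = Φ⁺ ∩ span {α_j : j ≠ i}` of the standard
Levi subsystem. -/
def parPos (i : Fin R.r) : Set R.V :=
  {η | η ∈ R.pos ∧ η ∈ Submodule.span ℚ (R.α '' {j | j ≠ i})}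

/-- The value `D_i (e^λ)` of the Demazure operator on a basis element of the
group ring `ℤ[X]`. -/
noncomputable def demOnBasis (i : Fin R.r) (lam : R.V) : R.V →₀ ℤ :=
  if 0 ≤ ⌊R.coroot (R.α i) lam⌋ then
    ∑ k ∈ Finset.range (⌊R.coroot (R.α i) lam⌋.toNat + 1),
      Finsupp.single (lam - (k : ℚ) • R.α i) 1
  else if ⌊R.coroot (R.α i) lam⌋ = -1 then 0
  else - ∑ k ∈ Finset.range ((-⌊R.coroot (R.α i) lam⌋).toNat - 1),
      Finsupp.single (lam + ((k : ℚ) + 1) • R.α i) 1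

/-- The Demazure operator `D_i`, as a `ℤ`-linear endomorphism of the group
ring `ℤ[X]` (realized as finitely supported functions `V →₀ ℤ`). -/
noncomputable def demOp (i : Fin R.r) : (R.V →₀ ℤ) →ₗ[ℤ] (R.V →₀ ℤ) :=
  Finsupp.lsum ℤ fun lam => LinearMap.toSpanSingleton ℤ (R.V →₀ ℤ) (R.demOnBasis i lam)

/-- The Demazure character `D_{i_1} ⋯ D_{i_k} (e^λ)`. -/
noncomputable def demChar (l : List (Fin R.r)) (lam : R.V) : R.V →₀ ℤ :=
  l.foldr (fun i p => R.demOp i p) (Finsupp.single lam 1)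

/-- The axioms of a finite crystallographic root system spanning `V`, with
simple roots `α_i` and positive roots `pos`. -/
structure IsRootSystem (R : RootData) : Prop where
  finite : R.Φ.Finite
  span_top : Submodule.span ℚ R.Φ = ⊤
  ne_zero : ∀ β ∈ R.Φ, β ≠ 0
  coroot_self : ∀ β ∈ R.Φ, R.coroot β β = 2
  crystallographic : ∀ β ∈ R.Φ, ∀ γ ∈ R.Φ, ∃ m : ℤ, R.coroot β γ = (m : ℚ)
  reflection_stable : ∀ β ∈ R.Φ, ∀ γ ∈ R.Φ, γ - R.coroot β γ • β ∈ R.Φ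
  simple_mem : ∀ i, R.α i ∈ R.Φ
  indep : LinearIndependent ℚ R.α
  pos_subset : R.pos ⊆ R.Φ
  pos_or_neg : ∀ β ∈ R.Φ, (β ∈ R.pos ∧ -β ∉ R.pos) ∨ (β ∉ R.pos ∧ -β ∈ R.pos)
  simple_pos : ∀ i, R.α i ∈ R.pos
  pos_nonneg_comb : ∀ β ∈ R.pos, ∃ c : Fin R.r → ℚ, (∀ i, 0 ≤ c i) ∧ β = ∑ i, c i • R.α i

end RootData
namespace RootData

variable (R : RootData)

lemma reflMap_apply (β : R.V) (v : R.V) : R.reflMap β v = v - R.coroot β v • β := by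
  simp [RootData.reflMap]

lemma reflMap_invol {β : R.V} (h2 : R.coroot β β = 2) :
    (R.reflMap β).comp (R.reflMap β) = LinearMap.id := by
  ext v
  simp only [LinearMap.comp_apply, reflMap_apply, map_sub, map_smul, h2, LinearMap.id_apply,
    smul_eq_mul]
  module

lemma s_apply {β : R.V} (h2 : R.coroot β β = 2) (v : R.V) :
    R.s β v = v - R.coroot β v • β := by
  rw [RootData.s, dif_pos (R.reflMap_invol h2)]
  simp [reflMap_apply]

lemma s_mul_self {β : R.V} (h2 : R.coroot β β = 2) : R.s β * R.s β = 1 := by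
  apply LinearEquiv.toLinearMap_injective
  apply LinearMap.ext
  intro v
  show R.s β (R.s β v) = v
  rw [R.s_apply h2, R.s_apply h2]
  simp only [map_sub, map_smul, h2, smul_eq_mul]
  module

lemma s_inv {β : R.V} (h2 : R.coroot β β = 2) : (R.s β)⁻¹ = R.s β :=
  inv_eq_of_mul_eq_one_right (R.s_mul_self h2)

lemma s_root {β : R.V} (h2 : R.coroot β β = 2) : R.s β β = -β := by
  rw [R.s_apply h2, h2]; module

@[simp] lemma wordProd_nil : R.wordProd [] = 1 := rfl

lemma wordProd_cons (j : Fin R.r) (n : List (Fin R.r)) :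
    R.wordProd (j :: n) = R.S j * R.wordProd n := by
  simp [RootData.wordProd]

lemma wordProd_append (a b : List (Fin R.r)) :
    R.wordProd (a ++ b) = R.wordProd a * R.wordProd b := by
  simp [RootData.wordProd]

lemma wordProd_singleton (j : Fin R.r) : R.wordProd [j] = R.S j := by
  simp [RootData.wordProd]

variable {R}

lemma IsRootSystem.coroot_simple_self (hR : R.IsRootSystem) (i : Fin R.r) : R.coroot (R.α i) (R.α i) = 2 :=
  hR.coroot_self _ (hR.simple_mem i)

lemma IsRootSystem.S_mul_self (hR : R.IsRootSystem) (i : Fin R.r) : R.S i * R.S i = 1 :=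
  R.s_mul_self (hR.coroot_simple_self i)

lemma IsRootSystem.S_inv (hR : R.IsRootSystem) (i : Fin R.r) : (R.S i)⁻¹ = R.S i :=
  R.s_inv (hR.coroot_simple_self i)

lemma IsRootSystem.S_apply (hR : R.IsRootSystem) (i : Fin R.r) (v : R.V) :
    R.S i v = v - R.coroot (R.α i) v • R.α i :=
  R.s_apply (hR.coroot_simple_self i) v

lemma IsRootSystem.neg_mem (hR : R.IsRootSystem) {β : R.V} (hβ : β ∈ R.Φ) : -β ∈ R.Φ := by
  have := hR.reflection_stable β hβ β hβ
  rwa [hR.coroot_self β hβ, show β - (2:ℚ) • β = -β by module] at this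

lemma IsRootSystem.s_maps (hR : R.IsRootSystem) {β : R.V} (hβ : β ∈ R.Φ) {γ : R.V} (hγ : γ ∈ R.Φ) :
    R.s β γ ∈ R.Φ := by
  rw [R.s_apply (hR.coroot_self β hβ)]
  exact hR.reflection_stable β hβ γ hγ

lemma IsRootSystem.S_maps (hR : R.IsRootSystem) (i : Fin R.r) {γ : R.V} (hγ : γ ∈ R.Φ) : R.S i γ ∈ R.Φ :=
  hR.s_maps (hR.simple_mem i) hγ

lemma IsRootSystem.wordProd_maps (hR : R.IsRootSystem) (m : List (Fin R.r)) {γ : R.V} (hγ : γ ∈ R.Φ) :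
    R.wordProd m γ ∈ R.Φ := by
  induction m with
  | nil => simpa using hγ
  | cons j n ih =>
    rw [R.wordProd_cons]
    exact hR.S_maps j ih

lemma IsRootSystem.wordProd_inv (hR : R.IsRootSystem) (m : List (Fin R.r)) :
    (R.wordProd m)⁻¹ = R.wordProd m.reverse := by
  induction m with
  | nil => simp
  | cons j n ih =>
    rw [R.wordProd_cons, List.reverse_cons, R.wordProd_append, ← ih, R.wordProd_singleton,
      mul_inv_rev, hR.S_inv]

lemma IsRootSystem.wordProd_inv_maps (hR : R.IsRootSystem) (m : List (Fin R.r)) {γ : R.V} (hγ : γ ∈ R.Φ) :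
    (R.wordProd m)⁻¹ γ ∈ R.Φ := by
  rw [hR.wordProd_inv]
  exact hR.wordProd_maps _ hγ

end RootData
namespace RootData

variable {R : RootData}

lemma IsRootSystem.refl_unique (hR : R.IsRootSystem) {β : R.V} (hβ : β ∈ R.Φ)
    (e₁ e₂ : R.Aut) (f₁ f₂ : Module.Dual ℚ R.V)
    (h1 : ∀ v, e₁ v = v - f₁ v • β) (h2 : ∀ v, e₂ v = v - f₂ v • β)
    (hf1 : f₁ β = 2) (hf2 : f₂ β = 2)
    (hs1 : ∀ γ ∈ R.Φ, e₁ γ ∈ R.Φ) (hs2 : ∀ γ ∈ R.Φ, e₂ γ ∈ R.Φ) : e₁ = e₂ := by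
  have claim1 : ∀ v, (e₁ * e₂) v = v + (f₂ v - f₁ v) • β := by
    intro v
    show e₁ (e₂ v) = _
    rw [h2 v, h1]
    simp only [map_sub, map_smul, hf1, smul_eq_mul]
    module
  have claimN : ∀ (n : ℕ), ∀ v, ((e₁ * e₂) ^ n) v = v + ((n : ℚ) * (f₂ v - f₁ v)) • β := by
    intro n
    induction n with
    | zero => intro v; simp
    | succ n ih =>
      intro v
      have step : ((e₁ * e₂) ^ (n + 1)) v = ((e₁ * e₂) ^ n) ((e₁ * e₂) v) := by
        rw [pow_succ]; rfl
      rw [step, ih, claim1 v]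
      simp only [map_add, map_sub, map_smul, hf1, hf2, smul_eq_mul]
      push_cast
      module
  set T := hR.finite.toFinset with hT
  have hmemT : ∀ x : R.V, x ∈ T ↔ x ∈ R.Φ := fun x => hR.finite.mem_toFinset
  have hmem : ∀ x : {x // x ∈ T}, (e₁ * e₂) (x : R.V) ∈ T := by
    intro x
    rw [hmemT]
    exact hs1 _ (hs2 _ ((hmemT _).mp x.2))
  let F : {x // x ∈ T} → {x // x ∈ T} := fun x => ⟨(e₁ * e₂) x, hmem x⟩
  have Finj : Function.Injective F := by
    intro a b hab
    have hval : ((e₁ * e₂) a : R.V) = (e₁ * e₂) b := congrArg Subtype.val hab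
    exact Subtype.ext ((e₁ * e₂).injective hval)
  have Fbij := Finite.injective_iff_bijective.mp Finj
  let σ : Equiv.Perm {x // x ∈ T} := Equiv.ofBijective F Fbij
  have hσ : ∀ (k : ℕ) (x : {x // x ∈ T}), (((σ ^ k) x : {x // x ∈ T}) : R.V)
      = ((e₁ * e₂) ^ k) (x : R.V) := by
    intro k
    induction k with
    | zero => intro x; simp
    | succ k ih =>
      intro x
      calc (((σ ^ (k+1)) x : {x // x ∈ T}) : R.V) = ((σ ^ k) (σ x) : R.V) := by
            rw [pow_succ]; rfl
        _ = ((e₁ * e₂) ^ k) ((σ x : {x // x ∈ T}) : R.V) := ih _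
        _ = ((e₁ * e₂) ^ k) ((e₁ * e₂) (x : R.V)) := rfl
        _ = ((e₁ * e₂) ^ (k+1)) (x : R.V) := by rw [pow_succ]; rfl
  have hfix : ∀ γ ∈ R.Φ, ((e₁ * e₂) ^ orderOf σ) γ = γ := by
    intro γ hγ
    have h := hσ (orderOf σ) ⟨γ, (hmemT γ).mpr hγ⟩
    rw [pow_orderOf_eq_one σ] at h
    simpa using h.symm
  have hd : ∀ γ ∈ R.Φ, f₁ γ = f₂ γ := by
    intro γ hγ
    have h := claimN (orderOf σ) γ
    rw [hfix γ hγ] at h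
    have h0 : (((orderOf σ : ℚ)) * (f₂ γ - f₁ γ)) • β = 0 := (left_eq_add.mp h)
    have hno : (0:ℚ) < (orderOf σ : ℚ) := by exact_mod_cast orderOf_pos σ
    rcases smul_eq_zero.mp h0 with h' | h'
    · rcases mul_eq_zero.mp h' with h'' | h''
      · exact absurd h'' (ne_of_gt hno)
      · linarith [sub_eq_zero.mp h'']
    · exact absurd h' (hR.ne_zero β hβ)
  apply LinearEquiv.toLinearMap_injective
  apply LinearMap.ext_on hR.span_top
  intro γ hγ
  show e₁ γ = e₂ γ
  rw [h1, h2, hd γ hγ]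

end RootData
namespace RootData

variable {R : RootData}

lemma IsRootSystem.s_stable (hR : R.IsRootSystem) {β : R.V} (hβ : β ∈ R.Φ) :
    ∀ γ ∈ R.Φ, R.s β γ ∈ R.Φ := fun _ hγ => hR.s_maps hβ hγ

lemma IsRootSystem.s_smul (hR : R.IsRootSystem) {γ : R.V} (hγ : γ ∈ R.Φ) {c : ℚ}
    (hc : c ≠ 0) (hcγ : c • γ ∈ R.Φ) : R.s (c • γ) = R.s γ := by
  have h2 : R.coroot (c • γ) (c • γ) = 2 := hR.coroot_self _ hcγ
  refine hR.refl_unique hγ _ _ (c • R.coroot (c • γ)) (R.coroot γ) ?_ (R.s_apply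
    (hR.coroot_self _ hγ)) ?_ (hR.coroot_self _ hγ) (hR.s_stable hcγ) (hR.s_stable hγ)
  · intro v
    rw [R.s_apply h2]
    simp only [LinearMap.smul_apply, smul_eq_mul]
    module
  · have : R.coroot (c • γ) (c • γ) = c * R.coroot (c • γ) γ := by
      rw [map_smul]; simp
    simp only [LinearMap.smul_apply, smul_eq_mul]
    rw [← this, h2]

lemma IsRootSystem.s_neg (hR : R.IsRootSystem) {γ : R.V} (hγ : γ ∈ R.Φ) :
    R.s (-γ) = R.s γ := by
  have := hR.s_smul hγ (c := -1) (by norm_num) (by rw [neg_one_smul]; exact hR.neg_mem hγ)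
  rwa [neg_one_smul] at this

lemma IsRootSystem.exists_pos_s (hR : R.IsRootSystem) {γ : R.V} (hγ : γ ∈ R.Φ) :
    ∃ β ∈ R.pos, R.s β = R.s γ := by
  rcases hR.pos_or_neg γ hγ with ⟨h, -⟩ | ⟨-, h⟩
  · exact ⟨γ, h, rfl⟩
  · exact ⟨-γ, h, hR.s_neg hγ⟩

lemma IsRootSystem.wordProd_conj (hR : R.IsRootSystem) (m : List (Fin R.r)) {β : R.V}
    (hβ : β ∈ R.Φ) :
    R.wordProd m * R.s β * (R.wordProd m)⁻¹ = R.s (R.wordProd m β) := by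
  have hwβ : R.wordProd m β ∈ R.Φ := hR.wordProd_maps m hβ
  refine hR.refl_unique hwβ _ _ ((R.coroot β).comp ((R.wordProd m)⁻¹ : R.Aut).toLinearMap)
    (R.coroot (R.wordProd m β)) ?_ (R.s_apply (hR.coroot_self _ hwβ)) ?_
    (hR.coroot_self _ hwβ) ?_ (hR.s_stable hwβ)
  · intro v
    show R.wordProd m (R.s β ((R.wordProd m)⁻¹ v)) = _
    rw [R.s_apply (hR.coroot_self _ hβ)]
    simp only [map_sub, map_smul, LinearMap.comp_apply, LinearEquiv.coe_coe]
    congr 1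
    exact (R.wordProd m).apply_symm_apply v
  · show R.coroot β ((R.wordProd m)⁻¹ (R.wordProd m β)) = 2
    rw [show (R.wordProd m)⁻¹ (R.wordProd m β) = β from (R.wordProd m).symm_apply_apply β]
    exact hR.coroot_self _ hβ
  · intro γ hγ
    show R.wordProd m (R.s β ((R.wordProd m)⁻¹ γ)) ∈ R.Φ
    exact hR.wordProd_maps m (hR.s_maps hβ (hR.wordProd_inv_maps m hγ))

lemma IsRootSystem.simple_flip (hR : R.IsRootSystem) {β : R.V} (hβΦ : β ∈ R.Φ)
    (hβp : β ∈ R.pos) (i : Fin R.r) (h : R.S i β ∉ R.pos) :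
    ∃ c : ℚ, c ≠ 0 ∧ β = c • R.α i := by
  obtain ⟨c, hc0, hcsum⟩ := hR.pos_nonneg_comb β hβp
  have hSβΦ : R.S i β ∈ R.Φ := hR.S_maps i hβΦ
  have hneg : -(R.S i β) ∈ R.pos := by
    rcases hR.pos_or_neg _ hSβΦ with ⟨h1, -⟩ | ⟨-, h2⟩
    · exact absurd h1 h
    · exact h2
  obtain ⟨e, he0, hesum⟩ := hR.pos_nonneg_comb _ hneg
  set d : ℚ := R.coroot (R.α i) β with hd
  have hzero : ∑ k, ((c k + e k) - (if k = i then d else 0)) • R.α k = 0 := by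
    have hval : R.S i β = β - d • R.α i := hR.S_apply i β
    have : ∑ k, (if k = i then d else 0) • R.α k = d • R.α i := by
      have : ∀ k, (if k = i then d else 0) • R.α k = if k = i then d • R.α k else 0 := by
        intro k; split <;> simp
      simp only [this]
      simp [Finset.sum_ite_eq' Finset.univ i (fun k => d • R.α k)]
    simp only [sub_smul, add_smul, Finset.sum_sub_distrib, Finset.sum_add_distrib, this,
      ← hcsum, ← hesum]
    rw [hval]
    module
  have hcoef := Fintype.linearIndependent_iff.mp hR.indep _ hzero
  have hck : ∀ k, k ≠ i → c k = 0 := by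
    intro k hk
    have := hcoef k
    rw [if_neg hk] at this
    have he := he0 k
    have hc := hc0 k
    linarith
  have hsum : β = c i • R.α i := by
    rw [hcsum]
    rw [Finset.sum_eq_single i]
    · intro k _ hk
      rw [hck k hk, zero_smul]
    · intro hi
      exact absurd (Finset.mem_univ i) hi
  refine ⟨c i, ?_, hsum⟩
  intro h0
  rw [h0, zero_smul] at hsum
  exact hR.ne_zero β hβΦ hsum

end RootData
namespace RootData

variable (R : RootData)

/-- `w` is a product of simple reflections. -/
def InW (w : R.Aut) : Prop := ∃ m : List (Fin R.r), R.wordProd m = w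

/-- A Bruhat covering-type step: multiply by a reflection, increasing length. -/
def Step (u x : R.Aut) : Prop :=
  R.InW u ∧ ∃ β ∈ R.pos, R.s β * u = x ∧ R.len u < R.len x

/-- Chains of `Step`s. -/
def Chain : R.Aut → R.Aut → Prop := Relation.ReflTransGen R.Step

lemma len_le (m : List (Fin R.r)) : R.len (R.wordProd m) ≤ m.length :=
  Nat.sInf_le ⟨m, rfl, rfl⟩

lemma len_eq_zero_of_not_inW {x : R.Aut} (h : ¬ R.InW x) : R.len x = 0 := by
  have hempty : {n | ∃ l : List (Fin R.r), l.length = n ∧ R.wordProd l = x} = ∅ := by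
    ext n
    simp only [Set.mem_empty_iff_false, iff_false, Set.mem_setOf_eq, not_exists]
    rintro l ⟨-, hl⟩
    exact h ⟨l, hl⟩
  rw [RootData.len, hempty, Nat.sInf_empty]

lemma inW_of_len_pos {x : R.Aut} (h : 0 < R.len x) : R.InW x := by
  by_contra hx
  rw [R.len_eq_zero_of_not_inW hx] at h
  omega

lemma exists_reduced {w : R.Aut} (h : R.InW w) :
    ∃ m, R.Reduced m ∧ R.wordProd m = w := by
  obtain ⟨m0, hm0⟩ := h
  have hne : {n | ∃ l : List (Fin R.r), l.length = n ∧ R.wordProd l = w}.Nonempty :=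
    ⟨m0.length, m0, rfl, hm0⟩
  obtain ⟨l, hlen, hprod⟩ := Nat.sInf_mem hne
  refine ⟨l, ?_, hprod⟩
  show R.len (R.wordProd l) = l.length
  rw [hprod]
  exact hlen.symm

lemma inW_wordProd (m : List (Fin R.r)) : R.InW (R.wordProd m) := ⟨m, rfl⟩

lemma inW_one : R.InW 1 := ⟨[], rfl⟩

lemma InW.smul {R : RootData} {w : R.Aut} (h : R.InW w) (i : Fin R.r) : R.InW (R.S i * w) := by
  obtain ⟨m, hm⟩ := h
  exact ⟨i :: m, by rw [R.wordProd_cons, hm]⟩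

lemma len_S_mul_le {w : R.Aut} (hw : R.InW w) (i : Fin R.r) :
    R.len (R.S i * w) ≤ R.len w + 1 := by
  obtain ⟨m, hred, hprod⟩ := R.exists_reduced hw
  have h1 : R.wordProd (i :: m) = R.S i * w := by rw [R.wordProd_cons, hprod]
  have h2 := R.len_le (i :: m)
  rw [h1] at h2
  have h3 : m.length = R.len w := by rw [← hprod]; exact hred.symm
  simpa [h3] using h2

variable {R}

lemma IsRootSystem.len_S_mul_ge (hR : R.IsRootSystem) {w : R.Aut} (hw : R.InW w)
    (i : Fin R.r) : R.len w ≤ R.len (R.S i * w) + 1 := by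
  have := R.len_S_mul_le (hw.smul i) i
  rwa [← mul_assoc, hR.S_mul_self i, one_mul] at this

lemma IsRootSystem.strong_exchange (hR : R.IsRootSystem) :
    ∀ (m : List (Fin R.r)) {β : R.V}, β ∈ R.pos → (R.wordProd m)⁻¹ β ∉ R.pos →
    ∃ (m₁ m₂ : List (Fin R.r)) (j : Fin R.r), m = m₁ ++ j :: m₂ ∧
      R.s β * R.wordProd m = R.wordProd (m₁ ++ m₂) := by
  intro m
  induction m with
  | nil =>
    intro β hβ habs
    refine absurd ?_ habs
    simpa using hβ
  | cons j n ih =>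
    intro β hβp habs
    have hβΦ := hR.pos_subset hβp
    by_cases hb' : R.S j β ∈ R.pos
    · have hrec : (R.wordProd n)⁻¹ (R.S j β) ∉ R.pos := by
        have heq : (R.wordProd (j :: n))⁻¹ β = (R.wordProd n)⁻¹ (R.S j β) := by
          rw [R.wordProd_cons, mul_inv_rev, hR.S_inv]
          rfl
        rwa [heq] at habs
      obtain ⟨n₁, n₂, j', hsplit, hprod⟩ := ih hb' hrec
      refine ⟨j :: n₁, n₂, j', by rw [hsplit]; rfl, ?_⟩
      have hconj : R.S j * R.s β * R.S j = R.s (R.S j β) := by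
        have hc := hR.wordProd_conj [j] hβΦ
        rw [R.wordProd_singleton, hR.S_inv] at hc
        exact hc
      have key : R.s β * R.S j = R.S j * R.s (R.S j β) := by
        conv_lhs => rw [← one_mul (R.s β * R.S j), ← hR.S_mul_self j]
        rw [mul_assoc, ← mul_assoc (R.S j) (R.s β) (R.S j), hconj]
      rw [R.wordProd_cons, show ((j :: n₁) ++ n₂) = j :: (n₁ ++ n₂) from rfl,
        R.wordProd_cons, ← hprod, ← mul_assoc, key, mul_assoc]
    · obtain ⟨c, hc, hβeq⟩ := hR.simple_flip hβΦ hβp j hb'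
      have hsS : R.s β = R.S j := by
        rw [hβeq]
        exact hR.s_smul (hR.simple_mem j) hc (hβeq ▸ hβΦ)
      refine ⟨[], n, j, rfl, ?_⟩
      rw [R.wordProd_cons, ← mul_assoc, hsS, hR.S_mul_self j, one_mul]
      rfl

lemma IsRootSystem.len_lt_of_inv_neg (hR : R.IsRootSystem) {β : R.V} (hβ : β ∈ R.pos)
    {w : R.Aut} (hw : R.InW w) (h : w⁻¹ β ∉ R.pos) : R.len (R.s β * w) < R.len w := by
  obtain ⟨m, hred, hprod⟩ := R.exists_reduced hw
  obtain ⟨m₁, m₂, j, hsplit, hse⟩ := hR.strong_exchange m hβ (by rw [hprod]; exact h)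
  rw [hprod] at hse
  have hle : R.len (R.s β * w) ≤ (m₁ ++ m₂).length := by
    rw [hse]; exact R.len_le _
  have hlw : m.length = R.len w := by rw [← hprod]; exact hred.symm
  have hlen : m.length = (m₁ ++ m₂).length + 1 := by
    rw [hsplit]; simp only [List.length_append, List.length_cons]; omega
  omega

lemma IsRootSystem.len_lt_of_inv_pos (hR : R.IsRootSystem) {β : R.V} (hβ : β ∈ R.pos)
    {w : R.Aut} (hw : R.InW w) (hw' : R.InW (R.s β * w)) (h : w⁻¹ β ∈ R.pos) :
    R.len w < R.len (R.s β * w) := by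
  have hβΦ := hR.pos_subset hβ
  have h2 := hR.coroot_self β hβΦ
  have hwβΦ : w⁻¹ β ∈ R.Φ := by
    obtain ⟨m, hm⟩ := hw
    rw [← hm]
    exact hR.wordProd_inv_maps m hβΦ
  have hkey : (R.s β * w)⁻¹ β ∉ R.pos := by
    have heq : (R.s β * w)⁻¹ β = -(w⁻¹ β) := by
      rw [mul_inv_rev, R.s_inv h2]
      show w⁻¹ (R.s β β) = _
      rw [R.s_root h2, map_neg]
    rw [heq]
    rcases hR.pos_or_neg _ hwβΦ with ⟨-, hn⟩ | ⟨hn, -⟩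
    · exact hn
    · exact absurd h hn
  have hlt := hR.len_lt_of_inv_neg hβ hw' hkey
  rwa [show R.s β * (R.s β * w) = w by rw [← mul_assoc, R.s_mul_self h2, one_mul]] at hlt

lemma IsRootSystem.simple_dichotomy (hR : R.IsRootSystem) (i : Fin R.r) {w : R.Aut}
    (hw : R.InW w) : R.len (R.S i * w) < R.len w ∨ R.len w < R.len (R.S i * w) := by
  by_cases h : w⁻¹ (R.α i) ∈ R.pos
  · right; exact hR.len_lt_of_inv_pos (hR.simple_pos i) hw (hw.smul i) h
  · left; exact hR.len_lt_of_inv_neg (hR.simple_pos i) hw h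

lemma IsRootSystem.exists_reduced_sublist (hR : R.IsRootSystem) (m : List (Fin R.r)) :
    ∃ k, k.Sublist m ∧ R.Reduced k ∧ R.wordProd k = R.wordProd m := by
  induction m with
  | nil =>
    refine ⟨[], List.Sublist.refl [], ?_, rfl⟩
    show R.len (R.wordProd []) = ([] : List (Fin R.r)).length
    simp only [R.wordProd_nil, List.length_nil]
    have := R.len_le ([] : List (Fin R.r))
    simpa using this
  | cons j n ih =>
    obtain ⟨k, hk, hkred, hkprod⟩ := ih
    have hInW : R.InW (R.wordProd k) := ⟨k, rfl⟩
    by_cases hp : (R.wordProd k)⁻¹ (R.α j) ∈ R.pos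
    · refine ⟨j :: k, hk.cons₂ j, ?_, ?_⟩
      · have hlt : R.len (R.wordProd k) < R.len (R.S j * R.wordProd k) :=
          hR.len_lt_of_inv_pos (hR.simple_pos j) hInW (hInW.smul j) hp
        have hle := R.len_S_mul_le hInW j
        show R.len (R.wordProd (j :: k)) = (j :: k).length
        rw [R.wordProd_cons, List.length_cons, ← hkred]
        omega
      · rw [R.wordProd_cons, R.wordProd_cons, hkprod]
    · obtain ⟨k₁, k₂, j', hsplit, hse⟩ := hR.strong_exchange k (hR.simple_pos j) hp
      have hsub1 : (k₁ ++ k₂).Sublist k := by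
        rw [hsplit]
        exact (List.append_sublist_append_left k₁).mpr (List.sublist_cons_self j' k₂)
      have hInW2 : R.InW (R.s (R.α j) * R.wordProd k) := ⟨k₁ ++ k₂, hse.symm⟩
      refine ⟨k₁ ++ k₂, (hsub1.trans hk).trans (List.sublist_cons_self j n), ?_, ?_⟩
      · show R.len (R.wordProd (k₁ ++ k₂)) = (k₁ ++ k₂).length
        have hub : R.len (R.wordProd (k₁ ++ k₂)) ≤ (k₁ ++ k₂).length := R.len_le _
        have hlb := hR.len_S_mul_ge hInW j
        have hse' : R.S j * R.wordProd k = R.wordProd (k₁ ++ k₂) := hse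
        rw [hse'] at hlb
        have hlenk : k.length = (k₁ ++ k₂).length + 1 := by
          rw [hsplit]; simp only [List.length_append, List.length_cons]; omega
        rw [← hkred] at hlenk
        omega
      · rw [← hse, hkprod, R.wordProd_cons]
        rfl

lemma IsRootSystem.chain_subword_aux (hR : R.IsRootSystem) :
    ∀ N, ∀ w u : R.Aut, R.len w ≤ N → R.Chain u w →
    ∀ m, R.Reduced m → R.wordProd m = w → ∃ k, k.Sublist m ∧ R.wordProd k = u := by
  intro N
  induction N with
  | zero =>
    intro w u hlen hch m hred hprod
    rcases Relation.ReflTransGen.cases_tail hch with heq | ⟨w', hch', hstep⟩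
    · exact ⟨m, List.Sublist.refl m, by rw [hprod, heq]⟩
    · obtain ⟨-, β, -, -, hlt⟩ := hstep
      omega
  | succ N ihN =>
    intro w u hlen hch m hred hprod
    rcases Relation.ReflTransGen.cases_tail hch with heq | ⟨w', hch', hstep⟩
    · exact ⟨m, List.Sublist.refl m, by rw [hprod, heq]⟩
    · obtain ⟨hInWw', β, hβpos, hsw, hlt⟩ := hstep
      have hβΦ := hR.pos_subset hβpos
      have h2 := hR.coroot_self β hβΦ
      have hw' : R.s β * w = w' := by rw [← hsw, ← mul_assoc, R.s_mul_self h2, one_mul]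
      have hneg : w⁻¹ β ∉ R.pos := by
        intro hp
        have hwβΦ : w⁻¹ β ∈ R.Φ := by
          rw [← hprod]
          exact hR.wordProd_inv_maps m hβΦ
        have hkey : w'⁻¹ β ∉ R.pos := by
          have heq2 : w'⁻¹ β = -(w⁻¹ β) := by
            rw [← hw', mul_inv_rev, R.s_inv h2]
            show w⁻¹ (R.s β β) = _
            rw [R.s_root h2, map_neg]
          rw [heq2]
          rcases hR.pos_or_neg _ hwβΦ with ⟨-, hn⟩ | ⟨hn, -⟩
          · exact hn
          · exact absurd hp hn
        have hcon := hR.len_lt_of_inv_neg hβpos hInWw' hkey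
        rw [hsw] at hcon
        omega
      obtain ⟨m₁, m₂, j, hsplit, hse⟩ := hR.strong_exchange m hβpos (by rw [hprod]; exact hneg)
      rw [hprod, hw'] at hse
      obtain ⟨k', hk'sub, hk'red, hk'prod⟩ := hR.exists_reduced_sublist (m₁ ++ m₂)
      have hlenw' : R.len w' ≤ N := by omega
      obtain ⟨k, hksub, hkprod⟩ := ihN w' u hlenw' hch' k' hk'red (by rw [hk'prod, ← hse])
      refine ⟨k, ?_, hkprod⟩
      have hms : (m₁ ++ m₂).Sublist m := by
        rw [hsplit]
        exact (List.append_sublist_append_left m₁).mpr (List.sublist_cons_self j m₂)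
      exact (hksub.trans hk'sub).trans hms

lemma IsRootSystem.chain_subword (hR : R.IsRootSystem) {w u : R.Aut} (hch : R.Chain u w)
    {m : List (Fin R.r)} (hred : R.Reduced m) (hprod : R.wordProd m = w) :
    ∃ k, k.Sublist m ∧ R.wordProd k = u :=
  hR.chain_subword_aux (R.len w) w u le_rfl hch m hred hprod

end RootData
namespace RootData

variable {R : RootData}

lemma IsRootSystem.step_S (hR : R.IsRootSystem) (i : Fin R.r) {v : R.Aut} (hv : R.InW v)
    (h : R.len v < R.len (R.S i * v)) : R.Step v (R.S i * v) :=
  ⟨hv, R.α i, hR.simple_pos i, rfl, h⟩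

lemma IsRootSystem.step_S_down (hR : R.IsRootSystem) (i : Fin R.r) {u : R.Aut}
    (hu : R.InW u) (h : R.len (R.S i * u) < R.len u) : R.Step (R.S i * u) u :=
  ⟨hu.smul i, R.α i, hR.simple_pos i, by rw [show R.s (R.α i) = R.S i from rfl,
    ← mul_assoc, hR.S_mul_self i, one_mul], h⟩

lemma IsRootSystem.step_smul (hR : R.IsRootSystem) (i : Fin R.r) {v' v : R.Aut}
    (h : R.Step v' v) (h1 : R.len v' < R.len (R.S i * v'))
    (h2 : R.len v < R.len (R.S i * v)) : R.Step (R.S i * v') (R.S i * v) := by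
  obtain ⟨hInW, β, hβpos, hsv, hlt⟩ := h
  have hβΦ := hR.pos_subset hβpos
  have hγΦ : R.S i β ∈ R.Φ := hR.S_maps i hβΦ
  obtain ⟨β', hβ'pos, hsβ'⟩ := hR.exists_pos_s hγΦ
  refine ⟨hInW.smul i, β', hβ'pos, ?_, ?_⟩
  · rw [hsβ']
    have hconj : R.S i * R.s β * R.S i = R.s (R.S i β) := by
      have hc := hR.wordProd_conj [i] hβΦ
      rw [R.wordProd_singleton, hR.S_inv] at hc
      exact hc
    rw [← hconj, ← hsv, mul_assoc (R.S i * R.s β) (R.S i) (R.S i * v'),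
      ← mul_assoc (R.S i) (R.S i) v', hR.S_mul_self i, one_mul, mul_assoc]
  · have hub := R.len_S_mul_le hInW i
    omega

lemma IsRootSystem.big (hR : R.IsRootSystem) : ∀ N : ℕ,
    (∀ m, R.Reduced m → m.length ≤ N → ∀ k, k.Sublist m →
      R.Chain (R.wordProd k) (R.wordProd m)) ∧
    (∀ u v : R.Aut, ∀ i : Fin R.r, R.InW u → R.Chain u v → R.len v ≤ N →
      R.len v < R.len (R.S i * v) → R.Chain (R.S i * u) (R.S i * v)) ∧
    (∀ u v : R.Aut, ∀ i : Fin R.r, R.InW u → R.Chain u v → R.len v ≤ N →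
      R.len (R.S i * v) < R.len v → R.Chain (R.S i * u) v) := by
  intro N
  induction N with
  | zero =>
    refine ⟨?_, ?_, ?_⟩
    · intro m hred hlen k hk
      have hm : m = [] := List.eq_nil_of_length_eq_zero (Nat.le_zero.mp hlen)
      subst hm
      rw [List.sublist_nil.mp hk]
      exact Relation.ReflTransGen.refl
    · intro u v i hu hch hlenv hlt
      rcases Relation.ReflTransGen.cases_tail hch with heq | ⟨v', hch', hstep⟩
      · rw [heq]
        exact Relation.ReflTransGen.refl
      · obtain ⟨-, β, -, -, hlt'⟩ := hstep
        omega
    · intro u v i hu hch hlenv hlt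
      omega
  | succ N ih =>
    obtain ⟨ihT, ihP1, ihP2⟩ := ih
    refine ⟨?_, ?_, ?_⟩
    · -- T1' : subword of reduced word gives chain
      intro m hred hlen k hk
      cases m with
      | nil =>
        rw [List.sublist_nil.mp hk]
        exact Relation.ReflTransGen.refl
      | cons j n =>
        have hInWn : R.InW (R.wordProd n) := R.inW_wordProd n
        have h2' : R.len (R.S j * R.wordProd n) = n.length + 1 := by
          have h2 : R.len (R.wordProd (j :: n)) = (j :: n).length := hred
          rw [R.wordProd_cons, List.length_cons] at h2
          exact h2
        have hub := R.len_S_mul_le hInWn j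
        have hlb := R.len_le n
        have hlenn : R.len (R.wordProd n) = n.length := by omega
        have hredn : R.Reduced n := hlenn
        have hlen' : n.length ≤ N := by
          rw [List.length_cons] at hlen
          omega
        rcases List.sublist_cons_iff.mp hk with hkn | ⟨k₁, hkeq, hk₁⟩
        · have hchain := ihT n hredn hlen' k hkn
          have hstep : R.Step (R.wordProd n) (R.wordProd (j :: n)) := by
            rw [R.wordProd_cons]
            exact hR.step_S j hInWn (by omega)
          exact hchain.tail hstep
        · subst hkeq
          have hchain := ihT n hredn hlen' k₁ hk₁
          have hlift := ihP1 (R.wordProd k₁) (R.wordProd n) j (R.inW_wordProd k₁) hchain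
            (by omega) (by omega)
          rw [R.wordProd_cons, R.wordProd_cons]
          exact hlift
    · -- P1 : lifting upward
      intro u v i hu hch hlenv hlt
      rcases Relation.ReflTransGen.cases_tail hch with heq | ⟨v', hch', hstep⟩
      · rw [heq]
        exact Relation.ReflTransGen.refl
      · obtain ⟨hInWv', β, hβp, hsv, hlt'⟩ := hstep
        have hInWv : R.InW v := R.inW_of_len_pos (by omega)
        rcases hR.simple_dichotomy i hInWv' with hcase | hcase
        · have h1 := ihP2 u v' i hu hch' (by omega) hcase
          have hstep1 : R.Step v' v := ⟨hInWv', β, hβp, hsv, hlt'⟩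
          have hstep2 : R.Step v (R.S i * v) := hR.step_S i hInWv hlt
          exact (h1.tail hstep1).tail hstep2
        · have h1 := ihP1 u v' i hu hch' (by omega) hcase
          have hstep2 := hR.step_smul i ⟨hInWv', β, hβp, hsv, hlt'⟩ hcase hlt
          exact h1.tail hstep2
    · -- P2 : lifting downward
      intro u v i hu hch hlenv hlt
      rcases hR.simple_dichotomy i hu with hdown | hup
      · exact Relation.ReflTransGen.head (hR.step_S_down i hu hdown) hch
      · rcases Relation.ReflTransGen.cases_tail hch with heq | ⟨v', hch', hstep⟩
        · exfalso
          rw [heq] at hlt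
          omega
        · obtain ⟨hInWv', β, hβp, hsv, hlt'⟩ := hstep
          have hInWv : R.InW v := R.inW_of_len_pos (by omega)
          rcases hR.simple_dichotomy i hInWv' with hcase | hcase
          · have h1 := ihP2 u v' i hu hch' (by omega) hcase
            exact h1.tail ⟨hInWv', β, hβp, hsv, hlt'⟩
          · have h1 := ihP1 u v' i hu hch' (by omega) hcase
            -- CORE : Chain (S i * v') v
            have hInWx : R.InW (R.S i * v) := hInWv.smul i
            have hlenx : R.len (R.S i * v) + 1 = R.len v := by
              have := hR.len_S_mul_ge hInWv i
              omega
            obtain ⟨n', hn'red, hn'prod⟩ := R.exists_reduced hInWx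
            have hSx : R.S i * (R.S i * v) = v := by
              rw [← mul_assoc, hR.S_mul_self i, one_mul]
            have hprodv : R.wordProd (i :: n') = v := by
              rw [R.wordProd_cons, hn'prod, hSx]
            have hn'len : n'.length = R.len (R.S i * v) := by
              rw [← hn'prod]; exact hn'red.symm
            have hredv : R.Reduced (i :: n') := by
              show R.len (R.wordProd (i :: n')) = (i :: n').length
              rw [hprodv, List.length_cons]
              omega
            have hchainv' : R.Chain v' v :=
              Relation.ReflTransGen.single ⟨hInWv', β, hβp, hsv, hlt'⟩
            obtain ⟨k, hksub, hkprod⟩ := hR.chain_subword hchainv' hredv hprodv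
            have hlenn' : n'.length ≤ N := by omega
            have hcore : R.Chain (R.S i * v') v := by
              rcases List.sublist_cons_iff.mp hksub with hkn | ⟨k₁, hkeq, hk₁⟩
              · have hchx : R.Chain v' (R.S i * v) := by
                  rw [← hkprod, ← hn'prod]
                  exact ihT n' hn'red hlenn' k hkn
                have hfin := ihP1 v' (R.S i * v) i hInWv' hchx (by omega)
                  (by rw [hSx]; omega)
                rwa [hSx] at hfin
              · have hπk₁ : R.wordProd k₁ = R.S i * v' := by
                  have hkk : R.wordProd k = R.S i * R.wordProd k₁ := by
                    rw [hkeq, R.wordProd_cons]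
                  rw [hkprod] at hkk
                  rw [hkk, ← mul_assoc, hR.S_mul_self i, one_mul]
                have hchx : R.Chain (R.S i * v') (R.S i * v) := by
                  rw [← hπk₁, ← hn'prod]
                  exact ihT n' hn'red hlenn' k₁ hk₁
                have hstepx : R.Step (R.S i * v) v :=
                  ⟨hInWx, R.α i, hR.simple_pos i, by
                    rw [show R.s (R.α i) = R.S i from rfl]; exact hSx, by omega⟩
                exact hchx.tail hstepx
            exact Relation.ReflTransGen.trans h1 hcore

lemma reduced_nil (R : RootData) : R.Reduced ([] : List (Fin R.r)) :=
  Nat.le_zero.mp (R.len_le ([] : List (Fin R.r)))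

lemma IsRootSystem.main (hR : R.IsRootSystem) (l : List (Fin R.r)) :
    (∃ m, m.Sublist l ∧ R.Reduced m ∧ R.wordProd m = R.dmulList l 1) ∧
    (∀ l', l'.Sublist l → R.Chain (R.wordProd l') (R.dmulList l 1)) := by
  induction l with
  | nil =>
    constructor
    · exact ⟨[], List.Sublist.refl [], R.reduced_nil, rfl⟩
    · intro l' hl'
      rw [List.sublist_nil.mp hl']
      exact Relation.ReflTransGen.refl
  | cons i t ih =>
    obtain ⟨⟨m, hmsub, hmred, hmprod⟩, hchain⟩ := ih
    have hD : R.dmulList (i :: t) 1 = R.dmulStep i (R.dmulList t 1) := rfl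
    have hInWD : R.InW (R.dmulList t 1) := ⟨m, hmprod⟩
    by_cases hc : R.len (R.dmulList t 1) < R.len (R.S i * R.dmulList t 1)
    · have hDval : R.dmulList (i :: t) 1 = R.S i * R.dmulList t 1 := by
        rw [hD]
        simp only [RootData.dmulStep]
        rw [if_pos hc]
      constructor
      · refine ⟨i :: m, hmsub.cons₂ i, ?_, ?_⟩
        · show R.len (R.wordProd (i :: m)) = (i :: m).length
          rw [R.wordProd_cons, hmprod, List.length_cons]
          have hub := R.len_S_mul_le hInWD i
          have hm' : m.length = R.len (R.dmulList t 1) := by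
            rw [← hmprod]; exact hmred.symm
          omega
        · rw [R.wordProd_cons, hmprod, hDval]
      · intro l' hl'
        rw [hDval]
        rcases List.sublist_cons_iff.mp hl' with hl't | ⟨l₁, hleq, hl₁⟩
        · exact (hchain l' hl't).tail (hR.step_S i hInWD hc)
        · subst hleq
          have h1 := hchain l₁ hl₁
          have hfin := (hR.big (R.len (R.dmulList t 1))).2.1 (R.wordProd l₁)
            (R.dmulList t 1) i (R.inW_wordProd l₁) h1 le_rfl hc
          rw [R.wordProd_cons]
          exact hfin
    · have hlt : R.len (R.S i * R.dmulList t 1) < R.len (R.dmulList t 1) := by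
        rcases hR.simple_dichotomy i hInWD with h | h
        · exact h
        · exact absurd h hc
      have hDval : R.dmulList (i :: t) 1 = R.dmulList t 1 := by
        rw [hD]
        simp only [RootData.dmulStep]
        rw [if_neg hc]
      constructor
      · exact ⟨m, hmsub.trans (List.sublist_cons_self i t), hmred, by rw [hmprod, hDval]⟩
      · intro l' hl'
        rw [hDval]
        rcases List.sublist_cons_iff.mp hl' with hl't | ⟨l₁, hleq, hl₁⟩
        · exact hchain l' hl't
        · subst hleq
          have h1 := hchain l₁ hl₁
          have hfin := (hR.big (R.len (R.dmulList t 1))).2.2 (R.wordProd l₁)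
            (R.dmulList t 1) i (R.inW_wordProd l₁) h1 le_rfl hlt
          rw [R.wordProd_cons]
          exact hfin

end RootData

theorem statement4 (R : RootData) (hR : R.IsRootSystem) (l : List (Fin R.r)) :
    (∃ l' : List (Fin R.r), l'.Sublist l ∧ R.wordProd l' = R.dmulList l 1) ∧
      ∀ g : R.Aut, (∃ l' : List (Fin R.r), l'.Sublist l ∧ R.wordProd l' = g) →
        R.BruhatLE g (R.dmulList l 1) := by
  obtain ⟨⟨m, hmsub, hmred, hmprod⟩, hchain⟩ := hR.main l
  constructor
  · exact ⟨m, hmsub, hmprod⟩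
  · rintro g ⟨l', hl'sub, rfl⟩
    obtain ⟨k, hksub, hkprod⟩ := hR.chain_subword (hchain l' hl'sub) hmred hmprod
    exact ⟨m, hmred, hmprod, k, hksub, hkprod⟩
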